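/- Let p ≥ 2, q = p/(p−1), δ ∈ (0,1) and n ∈ ℕ, n ≥ 1. Define Φ_{δ,n}(s,t) = min( max( (s+δ)^{p/2−1}, (t+δ)^{1−q/2} ), n ) for (s,t) ∈ (−δ/2, ∞)². Then: (a) Φ_{δ,n} is Lipschitz continuous on (−δ/2, ∞)²; (b) for every (s,t) ∈ (−δ/2, ∞)² and every v = (v₁,v₂) ∈ ℝ², the one-sided Gateaux derivative D⁺_vΦ_{δ,n}(s,t) := lim_{h→0⁺} (Φ_{δ,n}((s,t)+hv) − Φ_{δ,n}(s,t))/h exists; (c) if (s+δ)^p = (t+δ)^q and (s+δ)^{p/2−1} < n, then, writing φ(s) = (s+δ)^{p/2−1}, ψ(t) = (t+δ)^{1−q/2} and g(s) = (s+δ)^{p−1} − δ, one has D⁺_vΦ_{δ,n}(s,t) = φ'(s)·v₁ whenever v₂ ≤ g'(s)v₁, and D⁺_vΦ_{δ,n}(s,t) = ψ'(t)·v₂ whenever v₂ ≥ g'(s)v₁. -/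

import Mathlib

open Filter Topology

/-- The truncated maximum function `Φ_{δ,n}(s,t) = min(max((s+δ)^{p/2-1}, (t+δ)^{1-q/2}), n)`. -/
noncomputable def PhiDN (p q δ : ℝ) (n : ℕ) (s t : ℝ) : ℝ :=
  min (max ((s + δ) ^ (p / 2 - 1)) ((t + δ) ^ (1 - q / 2))) (n : ℝ)

private lemma slope_of_hasDerivAt {f : ℝ → ℝ} {A : ℝ} (hf : HasDerivAt f A 0) :
    Tendsto (fun h : ℝ => (f h - f 0) / h) (𝓝[>] 0) (𝓝 A) := by
  have h1 := hasDerivAt_iff_tendsto_slope_zero.mp hf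
  have h2 : Tendsto (fun t : ℝ => t⁻¹ • (f (0 + t) - f 0)) (𝓝[>] (0:ℝ)) (𝓝 A) :=
    h1.mono_left (nhdsWithin_mono _ (fun x hx => ne_of_gt hx))
  refine h2.congr fun t => ?_
  simp [smul_eq_mul, div_eq_inv_mul]

private lemma slope_max_of_eq {a b : ℝ → ℝ} {A B : ℝ}
    (ha : Tendsto (fun h : ℝ => (a h - a 0) / h) (𝓝[>] 0) (𝓝 A))
    (hb : Tendsto (fun h : ℝ => (b h - b 0) / h) (𝓝[>] 0) (𝓝 B))
    (hab : a 0 = b 0) :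
    Tendsto (fun h : ℝ => (max (a h) (b h) - max (a 0) (b 0)) / h) (𝓝[>] 0)
      (𝓝 (max A B)) := by
  refine (ha.max hb).congr' ?_
  filter_upwards [self_mem_nhdsWithin] with h (hh : (0:ℝ) < h)
  rw [← hab, max_self, max_div_div_right hh.le, max_sub_sub_right]

private lemma slope_max_of_lt {a b : ℝ → ℝ} {A : ℝ}
    (ha : Tendsto (fun h : ℝ => (a h - a 0) / h) (𝓝[>] 0) (𝓝 A))
    (hca : ContinuousAt a 0) (hcb : ContinuousAt b 0) (hlt : b 0 < a 0) :
    Tendsto (fun h : ℝ => (max (a h) (b h) - max (a 0) (b 0)) / h) (𝓝[>] 0) (𝓝 A) := by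
  refine ha.congr' ?_
  have hev : ∀ᶠ h in 𝓝 (0:ℝ), b h < a h := hcb.eventually_lt hca hlt
  filter_upwards [nhdsWithin_le_nhds hev] with h hh
  rw [max_eq_left hh.le, max_eq_left hlt.le]

private lemma slope_min_const_of_lt {m : ℝ → ℝ} {M c : ℝ}
    (hm : Tendsto (fun h : ℝ => (m h - m 0) / h) (𝓝[>] 0) (𝓝 M))
    (hc : ContinuousAt m 0) (hlt : m 0 < c) :
    Tendsto (fun h : ℝ => (min (m h) c - min (m 0) c) / h) (𝓝[>] 0) (𝓝 M) := by
  refine hm.congr' ?_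
  have hev : ∀ᶠ h in 𝓝 (0:ℝ), m h < c := hc.eventually_lt continuousAt_const hlt
  filter_upwards [nhdsWithin_le_nhds hev] with h hh
  rw [min_eq_left hh.le, min_eq_left hlt.le]

private lemma slope_min_const_of_eq {m : ℝ → ℝ} {M c : ℝ}
    (hm : Tendsto (fun h : ℝ => (m h - m 0) / h) (𝓝[>] 0) (𝓝 M)) (h0 : m 0 = c) :
    Tendsto (fun h : ℝ => (min (m h) c - min (m 0) c) / h) (𝓝[>] 0) (𝓝 (min M 0)) := by
  have h2 : Tendsto (fun h : ℝ => min ((m h - m 0) / h) ((0:ℝ) / h)) (𝓝[>] (0:ℝ))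
      (𝓝 (min M 0)) := by
    refine hm.min ?_
    refine tendsto_const_nhds.congr' ?_
    filter_upwards [self_mem_nhdsWithin] with h (hh : (0:ℝ) < h)
    rw [zero_div]
  refine h2.congr' ?_
  filter_upwards [self_mem_nhdsWithin] with h (hh : (0:ℝ) < h)
  rw [min_div_div_right hh.le, h0, min_self]
  congr 1
  rw [← min_sub_sub_right, sub_self]

private lemma slope_min_const_of_gt {m : ℝ → ℝ} {c : ℝ}
    (hc : ContinuousAt m 0) (hlt : c < m 0) :
    Tendsto (fun h : ℝ => (min (m h) c - min (m 0) c) / h) (𝓝[>] 0) (𝓝 0) := by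
  refine tendsto_const_nhds.congr' ?_
  have hev : ∀ᶠ h in 𝓝 (0:ℝ), c < m h := continuousAt_const.eventually_lt hc hlt
  filter_upwards [nhdsWithin_le_nhds hev] with h hh
  rw [min_eq_right hh.le, min_eq_right hlt.le, sub_self, zero_div]

private lemma exists_slope_minmax {a b : ℝ → ℝ} {A B n : ℝ}
    (ha : Tendsto (fun h : ℝ => (a h - a 0) / h) (𝓝[>] 0) (𝓝 A))
    (hb : Tendsto (fun h : ℝ => (b h - b 0) / h) (𝓝[>] 0) (𝓝 B))
    (hca : ContinuousAt a 0) (hcb : ContinuousAt b 0) :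
    ∃ L : ℝ, Tendsto
      (fun h : ℝ => (min (max (a h) (b h)) n - min (max (a 0) (b 0)) n) / h)
      (𝓝[>] 0) (𝓝 L) := by
  obtain ⟨M, hM⟩ : ∃ M : ℝ, Tendsto
      (fun h : ℝ => (max (a h) (b h) - max (a 0) (b 0)) / h) (𝓝[>] 0) (𝓝 M) := by
    rcases lt_trichotomy (a 0) (b 0) with hlt | heq | hgt
    · refine ⟨B, ?_⟩
      have := slope_max_of_lt hb hcb hca hlt
      exact this.congr fun h => by rw [max_comm (b h) (a h), max_comm (b 0) (a 0)]
    · exact ⟨max A B, slope_max_of_eq ha hb heq⟩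
    · exact ⟨A, slope_max_of_lt ha hca hcb hgt⟩
  have hcm : ContinuousAt (fun h => max (a h) (b h)) 0 := hca.max hcb
  rcases lt_trichotomy (max (a 0) (b 0)) n with hlt | heq | hgt
  · exact ⟨M, slope_min_const_of_lt hM hcm hlt⟩
  · exact ⟨min M 0, slope_min_const_of_eq hM heq⟩
  · exact ⟨0, slope_min_const_of_gt hcm hgt⟩

private lemma hasDerivAt_affine_rpow (s δ v γ : ℝ) (hs : 0 < s + δ) :
    HasDerivAt (fun h : ℝ => (s + h * v + δ) ^ γ) (γ * (s + δ) ^ (γ - 1) * v) 0 := by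
  have h1 : HasDerivAt (fun h : ℝ => s + h * v + δ) v 0 := by
    simpa using (((hasDerivAt_id (0:ℝ)).mul_const v).const_add s).add_const δ
  have hne : s + 0 * v + δ ≠ 0 := by simpa using hs.ne'
  have h2 := Real.hasDerivAt_rpow_const (x := s + 0 * v + δ) (p := γ) (Or.inl hne)
  have h3 := h2.comp 0 h1
  simpa [Function.comp_def, mul_assoc] using h3

private lemma genB (s t δ v₁ v₂ α β n : ℝ) (hs : 0 < s + δ) (ht : 0 < t + δ) :
    ∃ L : ℝ, Tendsto (fun h : ℝ =>
        (min (max ((s + h * v₁ + δ) ^ α) ((t + h * v₂ + δ) ^ β)) n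
          - min (max ((s + δ) ^ α) ((t + δ) ^ β)) n) / h)
      (𝓝[>] 0) (𝓝 L) := by
  have hA := hasDerivAt_affine_rpow s δ v₁ α hs
  have hB := hasDerivAt_affine_rpow t δ v₂ β ht
  obtain ⟨L, hL⟩ := exists_slope_minmax (slope_of_hasDerivAt hA) (slope_of_hasDerivAt hB)
    hA.continuousAt hB.continuousAt
  exact ⟨L, by simpa using hL⟩

private lemma genC (s t δ v₁ v₂ α β n : ℝ) (hs : 0 < s + δ) (ht : 0 < t + δ)
    (heq : (s + δ) ^ α = (t + δ) ^ β) (hlt : (s + δ) ^ α < n) :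
    Tendsto (fun h : ℝ =>
        (min (max ((s + h * v₁ + δ) ^ α) ((t + h * v₂ + δ) ^ β)) n
          - min (max ((s + δ) ^ α) ((t + δ) ^ β)) n) / h)
      (𝓝[>] 0)
      (𝓝 (max (α * (s + δ) ^ (α - 1) * v₁) (β * (t + δ) ^ (β - 1) * v₂))) := by
  have hA := hasDerivAt_affine_rpow s δ v₁ α hs
  have hB := hasDerivAt_affine_rpow t δ v₂ β ht
  have hab : (fun h : ℝ => (s + h * v₁ + δ) ^ α) 0 = (fun h : ℝ => (t + h * v₂ + δ) ^ β) 0 := by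
    simpa using heq
  have hmax := slope_max_of_eq (slope_of_hasDerivAt hA) (slope_of_hasDerivAt hB) hab
  have hcm : ContinuousAt
      (fun h : ℝ => max ((s + h * v₁ + δ) ^ α) ((t + h * v₂ + δ) ^ β)) 0 :=
    hA.continuousAt.max hB.continuousAt
  have hlt' : max ((s + 0 * v₁ + δ) ^ α) ((t + 0 * v₂ + δ) ^ β) < n := by
    simpa [← heq] using hlt
  have := slope_min_const_of_lt (c := n) hmax hcm hlt'
  simpa using this

private lemma lip_piece (δ γ : ℝ) (n : ℕ) (hδ0 : 0 < δ) (hδ1 : δ < 1) (hγ : 0 ≤ γ)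
    (hn : 1 ≤ n) :
    ∃ K : ℝ, 0 ≤ K ∧ ∀ x ∈ Set.Ioi (-δ / 2), ∀ y ∈ Set.Ioi (-δ / 2),
      |min ((x + δ) ^ γ) (n : ℝ) - min ((y + δ) ^ γ) (n : ℝ)| ≤ K * |x - y| := by
  have hn1 : (1 : ℝ) ≤ (n : ℝ) := by exact_mod_cast hn
  rcases eq_or_lt_of_le hγ with h0 | hγpos
  · refine ⟨0, le_rfl, fun x hx y hy => ?_⟩
    simp [← h0, Real.rpow_zero, min_eq_left hn1]
  · set c : ℝ := (n : ℝ) ^ (1 / γ) with hc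
    have hc1 : 1 ≤ c := Real.one_le_rpow hn1 (by positivity)
    have hcγ : c ^ γ = (n : ℝ) := by
      rw [hc, ← Real.rpow_mul (by positivity), one_div,
        inv_mul_cancel₀ hγpos.ne', Real.rpow_one]
    set x₀ : ℝ := c - δ with hx₀
    have hx₀δ : x₀ + δ = c := by ring
    have hx₀gt : -δ / 2 < x₀ := by
      have : δ / 2 < 1 := by linarith
      rw [hx₀]; linarith
    set S : Set ℝ := Set.Ioc (-δ / 2) x₀ with hS
    have clamp : ∀ x ∈ Set.Ioi (-δ / 2), min ((x + δ) ^ γ) (n : ℝ) = (min x x₀ + δ) ^ γ := by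
      intro x hx
      have hxδ : (0:ℝ) < x + δ := by
        have : -δ / 2 < x := hx; linarith
      rcases le_total x x₀ with hle | hle
      · rw [min_eq_left hle, min_eq_left]
        rw [← hcγ]
        exact Real.rpow_le_rpow hxδ.le (by linarith) hγ
      · rw [min_eq_right hle, hx₀δ, hcγ, min_eq_right]
        rw [← hcγ]
        have hcpos : (0:ℝ) < c := by linarith
        exact Real.rpow_le_rpow hcpos.le (by linarith) hγ
    set K : ℝ := γ * max ((δ / 2) ^ (γ - 1)) (c ^ (γ - 1)) with hK
    have hd2 : (0:ℝ) < δ / 2 := by linarith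
    have hK0 : 0 ≤ K := by
      apply mul_nonneg hγ
      exact le_trans (Real.rpow_pos_of_pos hd2 _).le (le_max_left _ _)
    refine ⟨K, hK0, fun x hx y hy => ?_⟩
    have hder : ∀ u ∈ S, HasDerivWithinAt (fun u : ℝ => (u + δ) ^ γ)
        (γ * (u + δ) ^ (γ - 1)) S u := by
      intro u hu
      have hupos : (0:ℝ) < u + δ := by
        have : -δ / 2 < u := hu.1; linarith
      have h1 : HasDerivAt (fun u : ℝ => u + δ) 1 u := (hasDerivAt_id u).add_const δ
      have h2 := Real.hasDerivAt_rpow_const (x := u + δ) (p := γ) (Or.inl hupos.ne')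
      have h3 := h2.comp u h1
      have : HasDerivAt (fun u : ℝ => (u + δ) ^ γ) (γ * (u + δ) ^ (γ - 1)) u := by
        simpa [Function.comp_def] using h3
      exact this.hasDerivWithinAt
    have hbound : ∀ u ∈ S, ‖γ * (u + δ) ^ (γ - 1)‖ ≤ K := by
      intro u hu
      have hul : δ / 2 < u + δ := by have : -δ / 2 < u := hu.1; linarith
      have hur : u + δ ≤ c := by have : u ≤ x₀ := hu.2; rw [hx₀] at this; linarith
      have hpos : (0:ℝ) < u + δ := lt_trans hd2 hul
      rw [Real.norm_eq_abs, abs_of_nonneg (by positivity)]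
      refine mul_le_mul_of_nonneg_left ?_ hγ
      rcases le_or_gt 1 γ with h1 | h1
      · exact le_trans (Real.rpow_le_rpow hpos.le hur (by linarith)) (le_max_right _ _)
      · exact le_trans (Real.rpow_le_rpow_of_nonpos hd2 hul.le (by linarith)) (le_max_left _ _)
    have hmem : ∀ z ∈ Set.Ioi (-δ / 2), min z x₀ ∈ S :=
      fun z hz => ⟨lt_min hz hx₀gt, min_le_right _ _⟩
    rw [clamp x hx, clamp y hy]
    calc |(min x x₀ + δ) ^ γ - (min y x₀ + δ) ^ γ|
        ≤ K * ‖min x x₀ - min y x₀‖ := by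
          have := (convex_Ioc (-δ / 2) x₀).norm_image_sub_le_of_norm_hasDerivWithin_le
            hder hbound (hmem y hy) (hmem x hx)
          simpa [Real.norm_eq_abs] using this
      _ ≤ K * |x - y| := by
          refine mul_le_mul_of_nonneg_left ?_ hK0
          have := abs_min_sub_min_le_max x x₀ y x₀
          simpa using this

/-- `Φ_{δ,n}` is Lipschitz on `(-δ/2,∞)²`, is one-sided Gateaux differentiable there, and on
the curve `(s+δ)^p = (t+δ)^q` (below level `n`) the one-sided derivative in direction `v` is
`φ'(s)v₁` on the closed half-plane `v₂ ≤ g'(s)v₁` and `ψ'(t)v₂` on `v₂ ≥ g'(s)v₁`. -/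
theorem phiDN_lipschitz_and_one_sided_gateaux
    (p q δ : ℝ) (n : ℕ) (hp : 2 ≤ p) (hq : q = p / (p - 1))
    (hδ0 : 0 < δ) (hδ1 : δ < 1) (hn : 1 ≤ n) :
    (∃ K : NNReal, LipschitzOnWith K (fun st : ℝ × ℝ => PhiDN p q δ n st.1 st.2)
      (Set.Ioi (-δ / 2) ×ˢ Set.Ioi (-δ / 2))) ∧
    (∀ s t : ℝ, -δ / 2 < s → -δ / 2 < t → ∀ v₁ v₂ : ℝ, ∃ L : ℝ,
      Tendsto (fun h : ℝ => (PhiDN p q δ n (s + h * v₁) (t + h * v₂) - PhiDN p q δ n s t) / h)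
        (𝓝[>] (0 : ℝ)) (𝓝 L)) ∧
    (∀ s t : ℝ, -δ / 2 < s → -δ / 2 < t →
      (s + δ) ^ p = (t + δ) ^ q → (s + δ) ^ (p / 2 - 1) < (n : ℝ) → ∀ v₁ v₂ : ℝ,
      (v₂ ≤ (p - 1) * (s + δ) ^ (p - 2) * v₁ →
        Tendsto (fun h : ℝ =>
            (PhiDN p q δ n (s + h * v₁) (t + h * v₂) - PhiDN p q δ n s t) / h)
          (𝓝[>] (0 : ℝ)) (𝓝 ((p / 2 - 1) * (s + δ) ^ (p / 2 - 2) * v₁))) ∧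
      ((p - 1) * (s + δ) ^ (p - 2) * v₁ ≤ v₂ →
        Tendsto (fun h : ℝ =>
            (PhiDN p q δ n (s + h * v₁) (t + h * v₂) - PhiDN p q δ n s t) / h)
          (𝓝[>] (0 : ℝ)) (𝓝 ((1 - q / 2) * (t + δ) ^ (-(q / 2)) * v₂)))) := by
  have hp1 : (0:ℝ) < p - 1 := by linarith
  have hp0 : (0:ℝ) < p := by linarith
  have hq2 : q ≤ 2 := by
    rw [hq, div_le_iff₀ hp1]; linarith
  have hγ1 : (0:ℝ) ≤ p / 2 - 1 := by linarith
  have hγ2 : (0:ℝ) ≤ 1 - q / 2 := by linarith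
  refine ⟨?_, ?_, ?_⟩
  · -- Lipschitz
    obtain ⟨K₁, hK₁0, hK₁⟩ := lip_piece δ (p / 2 - 1) n hδ0 hδ1 hγ1 hn
    obtain ⟨K₂, hK₂0, hK₂⟩ := lip_piece δ (1 - q / 2) n hδ0 hδ1 hγ2 hn
    have hKmax0 : (0:ℝ) ≤ max K₁ K₂ := le_trans hK₁0 (le_max_left _ _)
    refine ⟨(max K₁ K₂).toNNReal, LipschitzOnWith.of_dist_le_mul ?_⟩
    rintro ⟨s, t⟩ ⟨hs, ht⟩ ⟨s', t'⟩ ⟨hs', ht'⟩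
    rw [Prod.dist_eq]
    simp only [Real.dist_eq, Real.coe_toNNReal _ hKmax0, PhiDN]
    rw [min_max_distrib_right, min_max_distrib_right]
    calc |max (min ((s + δ) ^ (p / 2 - 1)) (n:ℝ)) (min ((t + δ) ^ (1 - q / 2)) (n:ℝ))
          - max (min ((s' + δ) ^ (p / 2 - 1)) (n:ℝ)) (min ((t' + δ) ^ (1 - q / 2)) (n:ℝ))|
        ≤ max (|min ((s + δ) ^ (p / 2 - 1)) (n:ℝ) - min ((s' + δ) ^ (p / 2 - 1)) (n:ℝ)|)
            (|min ((t + δ) ^ (1 - q / 2)) (n:ℝ) - min ((t' + δ) ^ (1 - q / 2)) (n:ℝ)|) :=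
          abs_max_sub_max_le_max _ _ _ _
      _ ≤ max K₁ K₂ * max |s - s'| |t - t'| := by
          apply max_le
          · exact le_trans (hK₁ s hs s' hs')
              (mul_le_mul (le_max_left _ _) (le_max_left _ _) (abs_nonneg _) hKmax0)
          · exact le_trans (hK₂ t ht t' ht')
              (mul_le_mul (le_max_right _ _) (le_max_right _ _) (abs_nonneg _) hKmax0)
  · -- existence of one-sided derivatives
    intro s t hs ht v₁ v₂
    have hs' : (0:ℝ) < s + δ := by linarith
    have ht' : (0:ℝ) < t + δ := by linarith
    obtain ⟨L, hL⟩ := genB s t δ v₁ v₂ (p / 2 - 1) (1 - q / 2) (n : ℝ) hs' ht'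
    exact ⟨L, by simpa only [PhiDN] using hL⟩
  · -- derivative on the curve
    intro s t hs ht hcurve hltn v₁ v₂
    have hs' : (0:ℝ) < s + δ := by linarith
    have ht' : (0:ℝ) < t + δ := by linarith
    have heq : (s + δ) ^ (p / 2 - 1) = (t + δ) ^ (1 - q / 2) := by
      have h1 : (s + δ) ^ (p / 2 - 1) = ((s + δ) ^ p) ^ ((1:ℝ) / 2 - 1 / p) := by
        rw [← Real.rpow_mul hs'.le]
        congr 1; field_simp
      have h2 : (t + δ) ^ (1 - q / 2) = ((t + δ) ^ q) ^ ((1:ℝ) / 2 - 1 / p) := by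
        rw [← Real.rpow_mul ht'.le]
        congr 1; rw [hq]; field_simp; ring
      rw [h1, h2, hcurve]
    have hpow : (t + δ) ^ ((1 - q / 2) - 1) = (s + δ) ^ (-(p / 2)) := by
      rw [show (1 - q / 2) - 1 = q * (-(1/2) : ℝ) by ring, Real.rpow_mul ht'.le,
        ← hcurve, ← Real.rpow_mul hs'.le]
      congr 1; ring
    have hcoef : (1 - q / 2) * (p - 1) = p / 2 - 1 := by
      rw [hq]; field_simp; ring
    have hid : ((1 - q / 2) * (t + δ) ^ ((1 - q / 2) - 1)) * ((p - 1) * (s + δ) ^ (p - 2))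
        = (p / 2 - 1) * (s + δ) ^ ((p / 2 - 1) - 1) := by
      rw [hpow, show (p / 2 - 1) - 1 = (-(p / 2)) + (p - 2) by ring, Real.rpow_add hs']
      rw [← hcoef]; ring
    have hψ : (0:ℝ) ≤ (1 - q / 2) * (t + δ) ^ ((1 - q / 2) - 1) :=
      mul_nonneg (by linarith) (Real.rpow_pos_of_pos ht' _).le
    have hgen := genC s t δ v₁ v₂ (p / 2 - 1) (1 - q / 2) (n : ℝ) hs' ht' heq hltn
    constructor
    · intro hv
      have h1 : (1 - q / 2) * (t + δ) ^ ((1 - q / 2) - 1) * v₂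
          ≤ (1 - q / 2) * (t + δ) ^ ((1 - q / 2) - 1) * ((p - 1) * (s + δ) ^ (p - 2) * v₁) :=
        mul_le_mul_of_nonneg_left hv hψ
      have h2 : (1 - q / 2) * (t + δ) ^ ((1 - q / 2) - 1) * ((p - 1) * (s + δ) ^ (p - 2) * v₁)
          = (p / 2 - 1) * (s + δ) ^ ((p / 2 - 1) - 1) * v₁ := by
        rw [← hid]; ring
      have hBA : (1 - q / 2) * (t + δ) ^ ((1 - q / 2) - 1) * v₂
          ≤ (p / 2 - 1) * (s + δ) ^ ((p / 2 - 1) - 1) * v₁ := h2 ▸ h1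
      rw [max_eq_left hBA, show (p / 2 - 1) - 1 = p / 2 - 2 by ring] at hgen
      simpa only [PhiDN] using hgen
    · intro hv
      have h1 : (1 - q / 2) * (t + δ) ^ ((1 - q / 2) - 1) * ((p - 1) * (s + δ) ^ (p - 2) * v₁)
          ≤ (1 - q / 2) * (t + δ) ^ ((1 - q / 2) - 1) * v₂ :=
        mul_le_mul_of_nonneg_left hv hψ
      have h2 : (1 - q / 2) * (t + δ) ^ ((1 - q / 2) - 1) * ((p - 1) * (s + δ) ^ (p - 2) * v₁)
          = (p / 2 - 1) * (s + δ) ^ ((p / 2 - 1) - 1) * v₁ := by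
        rw [← hid]; ring
      have hAB : (p / 2 - 1) * (s + δ) ^ ((p / 2 - 1) - 1) * v₁
          ≤ (1 - q / 2) * (t + δ) ^ ((1 - q / 2) - 1) * v₂ := h2 ▸ h1
      rw [max_eq_right hAB, show (1 - q / 2) - 1 = -(q / 2) by ring] at hgen
      simpa only [PhiDN] using hgen
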